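/- arXiv:cs/9901016 — 3 statements merged into one kernel-verified Lean document; each statement's English description precedes it below -/
import Mathlib

section
/- A family 𝒯 of theories is representable by a normal default theory with empty objective part (i.e., by some (D, ∅) with D a set of normal defaults) if and only if there exists a set of formulas Ψ such that 𝒯 = { Cn(Φ) : Φ is a maximal consistent subset of Ψ }. -/
/-- Propositional formulas over a set of atoms `α`. -/
inductive PropForm (α : Type) : Type
  | atom : α → PropForm α
  | fls  : PropForm α
  | impl : PropForm α → PropForm α → PropForm α

namespace PropForm

/-- Negation `¬φ`, definable as `φ → ⊥`. -/
def neg {α : Type} (φ : PropForm α) : PropForm α := impl φ fls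

/-- Conjunction, definable from implication and falsum. -/
def conj {α : Type} (φ ψ : PropForm α) : PropForm α := (φ.impl ψ.neg).neg

/-- Biimplication `φ ↔ ψ`. -/
def biimp {α : Type} (φ ψ : PropForm α) : PropForm α := conj (φ.impl ψ) (ψ.impl φ)

/-- Evaluation of a formula under a valuation of the atoms. -/
def eval {α : Type} (v : α → Prop) : PropForm α → Prop
  | atom a   => v a
  | fls      => False
  | impl φ ψ => eval v φ → eval v ψ

/-- Renaming/embedding of atoms. -/
def map {α β : Type} (f : α → β) : PropForm α → PropForm β
  | atom a   => atom (f a)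
  | fls      => fls
  | impl φ ψ => impl (map f φ) (map f ψ)

end PropForm

/-- Classical propositional consequence operator. -/
def Cn {α : Type} (S : Set (PropForm α)) : Set (PropForm α) :=
  {φ | ∀ v : α → Prop, (∀ ψ ∈ S, ψ.eval v) → φ.eval v}

/-- A theory: a set of formulas closed under propositional consequence. -/
def IsTheory {α : Type} (S : Set (PropForm α)) : Prop := Cn S ⊆ S

/-- A set of formulas is consistent if its consequences are not the whole language. -/
def Consistent {α : Type} (S : Set (PropForm α)) : Prop := Cn S ≠ Set.univ

/-- A default `α : Γ / β` with prerequisite, finite set of justifications, consequent. -/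
structure Default (α : Type) where
  pre : PropForm α
  jus : Finset (PropForm α)
  con : PropForm α

/-- A default is applicable w.r.t. `S` if no justification's negation follows from `S`. -/
def Default.Applicable {α : Type} (S : Set (PropForm α)) (d : Default α) : Prop :=
  ∀ γ ∈ d.jus, γ.neg ∉ Cn S

/-- The reduct of `D` w.r.t. `S`: the monotone rules `pre/con` of `S`-applicable defaults. -/
def Reduct {α : Type} (D : Set (Default α)) (S : Set (PropForm α)) :
    Set (PropForm α × PropForm α) :=
  {r | ∃ d ∈ D, d.Applicable S ∧ r = (d.pre, d.con)}

/-- `Cn^B(W)`: consequences of `W` in propositional calculus augmented with rules `B`;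
the least set containing `W`, closed under `Cn`, and closed under the rules of `B`. -/
def CnRules {α : Type} (B : Set (PropForm α × PropForm α)) (W : Set (PropForm α)) :
    Set (PropForm α) :=
  ⋂₀ {S | W ⊆ S ∧ Cn S ⊆ S ∧ ∀ r ∈ B, r.1 ∈ S → r.2 ∈ S}

/-- `S` is an extension of the default theory `(D, W)`. -/
def IsExtension {α : Type} (D : Set (Default α)) (W S : Set (PropForm α)) : Prop :=
  S = CnRules (Reduct D S) W

/-- The family of all extensions of `(D, W)`. -/
def ext {α : Type} (D : Set (Default α)) (W : Set (PropForm α)) : Set (Set (PropForm α)) :=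
  {S | IsExtension D W S}

/-- A default is prerequisite-free if its prerequisite is a tautology. -/
def Default.PrereqFree {α : Type} (d : Default α) : Prop :=
  d.pre ∈ Cn (∅ : Set (PropForm α))

/-- A default is normal if it has the form `α : {β} / β`. -/
def Default.Normal {α : Type} (d : Default α) : Prop := d.jus = {d.con}

/-!
For a normal default theory `(D, ∅)` take `Ψ` to be the set of conjunctions `⋀ l` of the
consequents of grounded chains `l` of defaults (each prerequisite follows from the consequents
applied before it). An extension `S` is generated by `Ψ ∩ S`, and a chain whose consequents are
consistent with `S` is applicable all the way up, so `Ψ ∩ S` is maximal consistent in `Ψ`.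
Conversely, if `Φ` is maximal consistent in `Ψ`, every default triggered by `Cn Φ` and
consistent with it extends some chain of `Φ` (by compactness, finitely many chains suffice to
derive its prerequisite), and maximality puts the longer chain into `Φ`; hence `Cn Φ` is an
extension. For the converse direction, `Ψ` is represented by the prerequisite-free normal
defaults `⊤ : ψ / ψ` with `ψ ∈ Ψ`.
-/

open PropForm Filter

section

variable {α : Type}

def Sat (v : α → Prop) (S : Set (PropForm α)) : Prop := ∀ ψ ∈ S, ψ.eval v

section Semantics

variable {v : α → Prop} {φ : PropForm α} {S T : Set (PropForm α)}

theorem mem_Cn : φ ∈ Cn S ↔ ∀ v, Sat v S → φ.eval v := Iff.rfl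

theorem subset_Cn (S : Set (PropForm α)) : S ⊆ Cn S := fun _ hφ _ hv => hv _ hφ

theorem Cn_mono (h : S ⊆ T) : Cn S ⊆ Cn T := fun _ hφ v hv => hφ v fun ψ hψ => hv ψ (h hψ)

theorem sat_Cn_iff : Sat v (Cn S) ↔ Sat v S :=
  ⟨fun h ψ hψ => h ψ (subset_Cn S hψ), fun h _ hψ => hψ v h⟩

theorem Cn_Cn (S : Set (PropForm α)) : Cn (Cn S) = Cn S := by
  ext φ
  simp only [mem_Cn, sat_Cn_iff]

theorem sat_insert_iff : Sat v (insert φ S) ↔ φ.eval v ∧ Sat v S := Set.forall_mem_insert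

theorem sat_union_iff : Sat v (S ∪ T) ↔ Sat v S ∧ Sat v T := forall₂_or_left

theorem consistent_iff_exists_sat : Consistent S ↔ ∃ v, Sat v S := by
  rw [Consistent, Ne, Set.eq_univ_iff_forall]
  constructor
  · intro h
    by_contra! hno
    exact h fun _ v hv => (hno v hv).elim
  · rintro ⟨v, hv⟩ h
    exact h fls v hv

theorem Consistent.anti (h : S ⊆ T) (hT : Consistent T) : Consistent S := by
  obtain ⟨v, hv⟩ := consistent_iff_exists_sat.1 hT
  exact consistent_iff_exists_sat.2 ⟨v, fun ψ hψ => hv ψ (h hψ)⟩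

theorem consistent_Cn_iff : Consistent (Cn S) ↔ Consistent S := by
  rw [Consistent, Consistent, Cn_Cn]

theorem neg_notMem_Cn_iff : φ.neg ∉ Cn S ↔ Consistent (insert φ S) := by
  simp only [mem_Cn, consistent_iff_exists_sat, sat_insert_iff, neg, eval, not_forall,
    not_false_eq_true, exists_prop, true_and, and_comm]

end Semantics

namespace PropForm

def verum : PropForm α := fls.neg

def conjAll (L : List (PropForm α)) : PropForm α := L.foldr conj verum

variable {v : α → Prop}

theorem verum_mem_Cn {S : Set (PropForm α)} : verum ∈ Cn S := fun _ _ => id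

theorem eval_conj {φ ψ : PropForm α} : (φ.conj ψ).eval v ↔ φ.eval v ∧ ψ.eval v := by
  simp only [conj, neg, eval]
  tauto

theorem eval_conjAll {L : List (PropForm α)} : (conjAll L).eval v ↔ ∀ φ ∈ L, φ.eval v := by
  induction L with
  | nil => exact iff_of_true id (by simp)
  | cons φ L ih =>
    simp only [conjAll, List.foldr_cons, List.forall_mem_cons, eval_conj] at ih ⊢
    rw [ih]

end PropForm

theorem eval_eventually_iff {ι : Type*} (U : Ultrafilter ι) (vs : ι → α → Prop) (φ : PropForm α) :
    φ.eval (fun a => ∀ᶠ i in U, vs i a) ↔ ∀ᶠ i in U, φ.eval (vs i) := by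
  induction φ with
  | atom a => rfl
  | fls => simpa [eval] using U.neBot.ne
  | impl φ ψ ihφ ihψ => simp only [eval, ihφ, ihψ, Ultrafilter.eventually_imp]

theorem exists_finset_of_mem_Cn {Φ : Set (PropForm α)} {φ : PropForm α} (h : φ ∈ Cn Φ) :
    ∃ Φ₀ : Finset (PropForm α), ↑Φ₀ ⊆ Φ ∧ φ ∈ Cn ↑Φ₀ := by
  classical
  by_contra! hfin
  have hcex : ∀ F : Finset Φ, ∃ v, (∀ ψ ∈ F, (ψ : PropForm α).eval v) ∧ ¬φ.eval v := by
    intro F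
    simpa [mem_Cn, Sat] using hfin (F.map (Function.Embedding.subtype _)) (by simp)
  choose vs hsat hφ using hcex
  -- the limit of the countermodels `vs F` along an ultrafilter refining `atTop`
  let U := Ultrafilter.of (atTop : Filter (Finset Φ))
  have hΦ : Sat (fun a => ∀ᶠ F in U, vs F a) Φ := fun ψ hψ =>
    (eval_eventually_iff U vs ψ).2 <| Ultrafilter.of_le atTop <|
      (eventually_ge_atTop {⟨ψ, hψ⟩}).mono fun F hF => hsat F _ (hF (Finset.mem_singleton_self _))
  obtain ⟨F, hF⟩ := ((eval_eventually_iff U vs φ).1 (h _ hΦ)).exists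
  exact hφ F hF

section Rules

variable {B : Set (PropForm α × PropForm α)} {W : Set (PropForm α)}

theorem CnRules_subset {S : Set (PropForm α)} (hW : W ⊆ S) (hCn : Cn S ⊆ S)
    (hB : ∀ r ∈ B, r.1 ∈ S → r.2 ∈ S) : CnRules B W ⊆ S :=
  Set.sInter_subset_of_mem ⟨hW, hCn, hB⟩

theorem Cn_CnRules_subset : Cn (CnRules B W) ⊆ CnRules B W := fun _ hφ =>
  Set.mem_sInter.2 fun _ hS => hS.2.1 (Cn_mono (Set.sInter_subset_of_mem hS) hφ)

theorem CnRules_rule {r : PropForm α × PropForm α} (hr : r ∈ B) (h : r.1 ∈ CnRules B W) :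
    r.2 ∈ CnRules B W :=
  Set.mem_sInter.2 fun S hS => hS.2.2 r hr (Set.mem_sInter.1 h S hS)

end Rules

theorem Default.Normal.applicable_iff {d : Default α} (hd : d.Normal) {S : Set (PropForm α)} :
    d.Applicable S ↔ Consistent (insert d.con S) := by
  rw [Default.Applicable, show d.jus = {d.con} from hd]
  simp only [Finset.mem_singleton, forall_eq, neg_notMem_Cn_iff]

theorem isExtension_Cn_of {D : Set (Default α)} {W Φ : Set (PropForm α)}
    (hΦ : Φ ⊆ CnRules (Reduct D (Cn Φ)) W) (hW : W ⊆ Cn Φ)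
    (hB : ∀ r ∈ Reduct D (Cn Φ), r.1 ∈ Cn Φ → r.2 ∈ Cn Φ) : IsExtension D W (Cn Φ) :=
  ((Cn_mono hΦ).trans Cn_CnRules_subset).antisymm (CnRules_subset hW (Cn_Cn Φ).subset hB)

namespace IsExtension

variable {D : Set (Default α)} {W S : Set (PropForm α)}

theorem Cn_subset (hS : IsExtension D W S) : Cn S ⊆ S := by
  rw [hS]
  exact Cn_CnRules_subset

theorem rule_mem (hS : IsExtension D W S) {r : PropForm α × PropForm α} (hr : r ∈ Reduct D S)
    (h : r.1 ∈ S) : r.2 ∈ S := by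
  rw [hS] at h ⊢
  exact CnRules_rule hr h

theorem subset_of_closed (hS : IsExtension D W S) {T : Set (PropForm α)} (hW : W ⊆ T)
    (hT : Cn T ⊆ T) (hB : ∀ r ∈ Reduct D S, r.1 ∈ T → r.2 ∈ T) : S ⊆ T := by
  rw [hS]
  exact CnRules_subset hW hT hB

theorem consistent_of_normal (hD : ∀ d ∈ D, d.Normal) (hW : Consistent W)
    (hS : IsExtension D W S) : Consistent S := by
  by_contra hinc
  -- no normal default is applicable with respect to an inconsistent theory
  have hB : ∀ r ∈ Reduct D S, r.1 ∈ Cn W → r.2 ∈ Cn W := by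
    rintro _ ⟨d, hd, happ, rfl⟩
    exact absurd ((hD d hd).applicable_iff.1 happ) fun h => hinc (h.anti (Set.subset_insert _ _))
  exact hinc ((consistent_Cn_iff.2 hW).anti (hS.subset_of_closed (subset_Cn W) (Cn_Cn W).subset hB))

end IsExtension

def IsMaxConsistentSubset (Ψ Φ : Set (PropForm α)) : Prop :=
  Φ ⊆ Ψ ∧ Consistent Φ ∧ ∀ Φ', Φ ⊆ Φ' → Φ' ⊆ Ψ → Consistent Φ' → Φ' = Φ

theorem IsMaxConsistentSubset.mem_of_consistent_insert {Ψ Φ : Set (PropForm α)}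
    (hΦ : IsMaxConsistentSubset Ψ Φ) {ψ : PropForm α} (hψ : ψ ∈ Ψ)
    (hc : Consistent (insert ψ Φ)) : ψ ∈ Φ :=
  hΦ.2.2 _ (Set.subset_insert ψ Φ) (Set.insert_subset hψ hΦ.1) hc ▸ Set.mem_insert ψ Φ

def maxConsistentTheories (Ψ : Set (PropForm α)) : Set (Set (PropForm α)) :=
  {T | ∃ Φ, IsMaxConsistentSubset Ψ Φ ∧ T = Cn Φ}

theorem maxConsistentTheories_eq (Ψ : Set (PropForm α)) :
    maxConsistentTheories Ψ = {T | ∃ Φ ⊆ Ψ, Consistent Φ ∧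
      (∀ Φ', Φ ⊆ Φ' → Φ' ⊆ Ψ → Consistent Φ' → Φ' = Φ) ∧ T = Cn Φ} := by
  simp only [maxConsistentTheories, IsMaxConsistentSubset, and_assoc]

/-- The witness is `Φ = Ψ ∩ S`. -/
theorem mem_maxConsistentTheories_of {Ψ S : Set (PropForm α)} (hS : Consistent S)
    (hcl : Cn S ⊆ S) (hgen : S ⊆ Cn (Ψ ∩ S))
    (hmax : ∀ ψ ∈ Ψ, Consistent (insert ψ S) → ψ ∈ S) : S ∈ maxConsistentTheories Ψ := by
  refine ⟨Ψ ∩ S, ⟨Set.inter_subset_left, hS.anti Set.inter_subset_right, ?_⟩,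
    hgen.antisymm ((Cn_mono Set.inter_subset_right).trans hcl)⟩
  intro Φ' hle hΦ'Ψ hΦ'
  obtain ⟨v, hv⟩ := consistent_iff_exists_sat.1 hΦ'
  have hvS : Sat v S := fun χ hχ => hgen hχ v fun θ hθ => hv θ (hle hθ)
  refine Set.Subset.antisymm (fun ψ hψ => ⟨hΦ'Ψ hψ, hmax ψ (hΦ'Ψ hψ) ?_⟩) hle
  exact consistent_iff_exists_sat.2 ⟨v, sat_insert_iff.2 ⟨hv ψ hψ, hvS⟩⟩

theorem IsExtension.mem_maxConsistentTheories {D : Set (Default α)} {Ψ S : Set (PropForm α)}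
    (hD : ∀ d ∈ D, d.Normal) (hS : IsExtension D ∅ S)
    (hB : ∀ r ∈ Reduct D S, r.1 ∈ Cn (Ψ ∩ S) → r.2 ∈ Cn (Ψ ∩ S))
    (hmax : ∀ ψ ∈ Ψ, Consistent (insert ψ S) → ψ ∈ S) : S ∈ maxConsistentTheories Ψ :=
  have hempty : Consistent (∅ : Set (PropForm α)) :=
    consistent_iff_exists_sat.2 ⟨fun _ => True, fun _ h => h.elim⟩
  mem_maxConsistentTheories_of (hS.consistent_of_normal hD hempty) hS.Cn_subset
    (hS.subset_of_closed (Set.empty_subset _) (Cn_Cn _).subset hB) hmax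

section Chains

variable {D : Set (Default α)}

def consequents (l : List (Default α)) : Set (PropForm α) := {φ | φ ∈ l.map Default.con}

def conjConsequents (l : List (Default α)) : PropForm α := conjAll (l.map Default.con)

theorem eval_conjConsequents {v : α → Prop} {l : List (Default α)} :
    (conjConsequents l).eval v ↔ Sat v (consequents l) :=
  eval_conjAll

theorem conjConsequents_mem_Cn (l : List (Default α)) : conjConsequents l ∈ Cn (consequents l) :=
  fun _ => eval_conjConsequents.2

theorem consistent_insert_conjConsequents_iff {l : List (Default α)} {S : Set (PropForm α)} :
    Consistent (insert (conjConsequents l) S) ↔ Consistent (consequents l ∪ S) := by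
  simp only [consistent_iff_exists_sat, sat_insert_iff, sat_union_iff, eval_conjConsequents]

theorem consequents_cons {d : Default α} {l : List (Default α)} :
    consequents (d :: l) = insert d.con (consequents l) := by
  ext
  simp [consequents]

theorem consequents_append {l₁ l₂ : List (Default α)} :
    consequents (l₁ ++ l₂) = consequents l₁ ∪ consequents l₂ := by
  ext
  simp [consequents]

/-- Grounded sequences of defaults of `D`, listed from the last one applied to the first. -/
inductive Chain (D : Set (Default α)) : List (Default α) → Prop
  | nil : Chain D []
  | cons {d : Default α} {l : List (Default α)} :
      d ∈ D → d.pre ∈ Cn (consequents l) → Chain D l → Chain D (d :: l)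

theorem Chain.append {l₁ l₂ : List (Default α)} (h₁ : Chain D l₁) (h₂ : Chain D l₂) :
    Chain D (l₁ ++ l₂) := by
  induction h₁ with
  | nil => exact h₂
  | cons hd hpre _ ih =>
    exact .cons hd (Cn_mono (consequents_append ▸ Set.subset_union_left) hpre) ih

/-- Every default of such a chain is applicable with respect to `S`. -/
theorem Chain.consequents_subset (hD : ∀ d ∈ D, d.Normal) {l : List (Default α)}
    (hl : Chain D l) {S T : Set (PropForm α)} (hT : Cn T ⊆ T)
    (hB : ∀ r ∈ Reduct D S, r.1 ∈ T → r.2 ∈ T) (hcons : Consistent (consequents l ∪ S)) :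
    consequents l ⊆ T := by
  induction hl with
  | nil => simp [consequents]
  | @cons d l hd hpre _ ih =>
    rw [consequents_cons] at hcons ⊢
    have hlT : consequents l ⊆ T :=
      ih (hcons.anti (Set.union_subset_union_left _ (Set.subset_insert _ _)))
    have happ : d.Applicable S := (hD d hd).applicable_iff.2 <|
      hcons.anti (Set.insert_subset (.inl (Set.mem_insert _ _)) Set.subset_union_right)
    exact Set.insert_subset (hB _ ⟨d, hd, happ, rfl⟩ (hT (Cn_mono hlT hpre))) hlT

def chainFormulas (D : Set (Default α)) : Set (PropForm α) := conjConsequents '' {l | Chain D l}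

theorem exists_chain_sat_iff_of_finset {Φ₀ : Finset (PropForm α)}
    (h : ↑Φ₀ ⊆ chainFormulas D) : ∃ l, Chain D l ∧ ∀ v, Sat v (consequents l) ↔ Sat v ↑Φ₀ := by
  classical
  induction Φ₀ using Finset.induction_on with
  | empty => exact ⟨[], .nil, fun v => by simp [Sat, consequents]⟩
  | insert φ Φ₀ _ ih =>
    rw [Finset.coe_insert, Set.insert_subset_iff] at h
    obtain ⟨⟨l₁, hl₁, rfl⟩, h⟩ := h
    obtain ⟨l₂, hl₂, hsat⟩ := ih h
    refine ⟨l₁ ++ l₂, hl₁.append hl₂, fun v => ?_⟩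
    rw [consequents_append, sat_union_iff, hsat, Finset.coe_insert, sat_insert_iff,
      eval_conjConsequents]

theorem exists_chain_of_mem_Cn {Φ : Set (PropForm α)} (hΦ : Φ ⊆ chainFormulas D)
    {φ : PropForm α} (h : φ ∈ Cn Φ) :
    ∃ l, Chain D l ∧ φ ∈ Cn (consequents l) ∧ consequents l ⊆ Cn Φ := by
  obtain ⟨Φ₀, hΦ₀, hφ⟩ := exists_finset_of_mem_Cn h
  obtain ⟨l, hl, hsat⟩ := exists_chain_sat_iff_of_finset (hΦ₀.trans hΦ)
  exact ⟨l, hl, fun v hv => hφ v ((hsat v).1 hv),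
    fun ψ hψ v hv => (hsat v).2 (fun χ hχ => hv χ (hΦ₀ hχ)) ψ hψ⟩

theorem exists_chainFormula_iff_con {Φ : Set (PropForm α)} (hΦ : Φ ⊆ chainFormulas D)
    {d : Default α} (hd : d ∈ D) (hpre : d.pre ∈ Cn Φ) :
    ∃ ψ ∈ chainFormulas D, ∀ v, Sat v Φ → (ψ.eval v ↔ d.con.eval v) := by
  obtain ⟨l, hl, hpre', hlΦ⟩ := exists_chain_of_mem_Cn hΦ hpre
  refine ⟨conjConsequents (d :: l), ⟨d :: l, .cons hd hpre' hl, rfl⟩, fun v hv => ?_⟩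
  rw [eval_conjConsequents, consequents_cons, sat_insert_iff]
  exact and_iff_left fun ψ hψ => hlΦ hψ v hv

end Chains

section Normal

variable {D : Set (Default α)}

theorem isExtension_Cn_of_isMaxConsistentSubset (hD : ∀ d ∈ D, d.Normal) {Φ : Set (PropForm α)}
    (hΦ : IsMaxConsistentSubset (chainFormulas D) Φ) : IsExtension D ∅ (Cn Φ) := by
  refine isExtension_Cn_of (fun _ hφ => ?_) (Set.empty_subset _) ?_
  · obtain ⟨l, hl, rfl⟩ := hΦ.1 hφ
    have hcons : Consistent (consequents l ∪ Cn Φ) := by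
      rw [← consistent_insert_conjConsequents_iff, Set.insert_eq_of_mem (subset_Cn Φ hφ),
        consistent_Cn_iff]
      exact hΦ.2.1
    exact Cn_CnRules_subset <| Cn_mono
      (hl.consequents_subset hD Cn_CnRules_subset (fun _ => CnRules_rule) hcons)
      (conjConsequents_mem_Cn l)
  · rintro _ ⟨d, hd, happ, rfl⟩ hpre
    obtain ⟨ψ, hψ, hiff⟩ := exists_chainFormula_iff_con hΦ.1 hd hpre
    obtain ⟨v, hv⟩ := consistent_iff_exists_sat.1 ((hD d hd).applicable_iff.1 happ)
    rw [sat_insert_iff, sat_Cn_iff] at hv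
    have hψΦ : ψ ∈ Φ := hΦ.mem_of_consistent_insert hψ <|
      consistent_iff_exists_sat.2 ⟨v, sat_insert_iff.2 ⟨(hiff v hv.2).2 hv.1, hv.2⟩⟩
    exact fun w hw => (hiff w hw).1 (hw ψ hψΦ)

theorem IsExtension.mem_maxConsistentTheories_chainFormulas (hD : ∀ d ∈ D, d.Normal)
    {S : Set (PropForm α)} (hS : IsExtension D ∅ S) :
    S ∈ maxConsistentTheories (chainFormulas D) := by
  refine hS.mem_maxConsistentTheories hD ?_ ?_
  · rintro _ ⟨d, hd, happ, rfl⟩ hpre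
    obtain ⟨ψ, hψ, hiff⟩ := exists_chainFormula_iff_con Set.inter_subset_left hd hpre
    have hcon : d.con ∈ S :=
      hS.rule_mem ⟨d, hd, happ, rfl⟩ (hS.Cn_subset (Cn_mono Set.inter_subset_right hpre))
    have hψS : ψ ∈ S := hS.Cn_subset fun v hv => (hiff v fun χ hχ => hv χ hχ.2).2 (hv _ hcon)
    exact fun v hv => (hiff v hv).1 (hv ψ ⟨hψ, hψS⟩)
  · rintro _ ⟨l, hl, rfl⟩ hcons
    exact hS.Cn_subset <| Cn_mono
      (hl.consequents_subset hD hS.Cn_subset (fun _ => hS.rule_mem)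
        (consistent_insert_conjConsequents_iff.1 hcons))
      (conjConsequents_mem_Cn l)

theorem ext_eq_maxConsistentTheories_chainFormulas (hD : ∀ d ∈ D, d.Normal) :
    ext D ∅ = maxConsistentTheories (chainFormulas D) := by
  refine Set.Subset.antisymm (fun _ hS => hS.mem_maxConsistentTheories_chainFormulas hD) ?_
  rintro _ ⟨Φ, hΦ, rfl⟩
  exact isExtension_Cn_of_isMaxConsistentSubset hD hΦ

end Normal

section PrerequisiteFree

variable {Ψ : Set (PropForm α)}

def freeDefault (ψ : PropForm α) : Default α := ⟨verum, {ψ}, ψ⟩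

theorem normal_freeDefault (ψ : PropForm α) : (freeDefault ψ).Normal := rfl

theorem mem_reduct_freeDefault_iff {S : Set (PropForm α)} {r : PropForm α × PropForm α} :
    r ∈ Reduct (freeDefault '' Ψ) S ↔ ∃ ψ ∈ Ψ, Consistent (insert ψ S) ∧ r = (verum, ψ) := by
  constructor
  · rintro ⟨_, ⟨ψ, hψ, rfl⟩, happ, rfl⟩
    exact ⟨ψ, hψ, (normal_freeDefault ψ).applicable_iff.1 happ, rfl⟩
  · rintro ⟨ψ, hψ, hcons, rfl⟩
    exact ⟨freeDefault ψ, ⟨ψ, hψ, rfl⟩, (normal_freeDefault ψ).applicable_iff.2 hcons, rfl⟩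

theorem isExtension_freeDefault_Cn {Φ : Set (PropForm α)} (hΦ : IsMaxConsistentSubset Ψ Φ) :
    IsExtension (freeDefault '' Ψ) ∅ (Cn Φ) := by
  refine isExtension_Cn_of (fun ψ hψ => ?_) (Set.empty_subset _) ?_
  · have hcons : Consistent (insert ψ (Cn Φ)) := by
      rw [Set.insert_eq_of_mem (subset_Cn Φ hψ), consistent_Cn_iff]
      exact hΦ.2.1
    exact CnRules_rule (mem_reduct_freeDefault_iff.2 ⟨ψ, hΦ.1 hψ, hcons, rfl⟩)
      (Cn_CnRules_subset verum_mem_Cn)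
  · intro r hr _
    obtain ⟨ψ, hψ, hcons, rfl⟩ := mem_reduct_freeDefault_iff.1 hr
    exact subset_Cn Φ <| hΦ.mem_of_consistent_insert hψ <|
      hcons.anti (Set.insert_subset_insert (subset_Cn Φ))

theorem IsExtension.mem_maxConsistentTheories_of_freeDefault {S : Set (PropForm α)}
    (hS : IsExtension (freeDefault '' Ψ) ∅ S) : S ∈ maxConsistentTheories Ψ := by
  have hmax : ∀ ψ ∈ Ψ, Consistent (insert ψ S) → ψ ∈ S := fun ψ hψ hcons =>
    hS.rule_mem (mem_reduct_freeDefault_iff.2 ⟨ψ, hψ, hcons, rfl⟩) (hS.Cn_subset verum_mem_Cn)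
  refine hS.mem_maxConsistentTheories (Set.forall_mem_image.2 fun ψ _ => normal_freeDefault ψ)
    (fun r hr _ => ?_) hmax
  obtain ⟨ψ, hψ, hcons, rfl⟩ := mem_reduct_freeDefault_iff.1 hr
  exact subset_Cn _ ⟨hψ, hmax ψ hψ hcons⟩

theorem ext_freeDefault (Ψ : Set (PropForm α)) :
    ext (freeDefault '' Ψ) ∅ = maxConsistentTheories Ψ := by
  refine Set.Subset.antisymm (fun _ hS => hS.mem_maxConsistentTheories_of_freeDefault) ?_
  rintro _ ⟨Φ, hΦ, rfl⟩
  exact isExtension_freeDefault_Cn hΦ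

end PrerequisiteFree

end

theorem representable_by_normal_empty_objective_iff_general {α : Type}
    (𝒯 : Set (Set (PropForm α))) :
    (∃ D : Set (Default α), (∀ d ∈ D, d.Normal) ∧ ext D (∅ : Set (PropForm α)) = 𝒯) ↔
      ∃ Ψ : Set (PropForm α),
        𝒯 = {T | ∃ Φ ⊆ Ψ, Consistent Φ ∧
          (∀ Φ', Φ ⊆ Φ' → Φ' ⊆ Ψ → Consistent Φ' → Φ' = Φ) ∧
          T = Cn Φ} := by
  simp only [← maxConsistentTheories_eq]
  constructor
  · rintro ⟨D, hD, rfl⟩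
    exact ⟨chainFormulas D, ext_eq_maxConsistentTheories_chainFormulas hD⟩
  · rintro ⟨Ψ, rfl⟩
    exact ⟨freeDefault '' Ψ, Set.forall_mem_image.2 fun ψ _ => normal_freeDefault ψ,
      ext_freeDefault Ψ⟩

/-- characterization of families representable by normal default theories
with empty objective part. -/
theorem representable_by_normal_empty_objective_iff {α : Type} [Denumerable α]
    (𝒯 : Set (Set (PropForm α))) :
    (∃ D : Set (Default α), (∀ d ∈ D, d.Normal) ∧ ext D (∅ : Set (PropForm α)) = 𝒯) ↔
      ∃ Ψ : Set (PropForm α),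
        𝒯 = {T | ∃ Φ ⊆ Ψ, Consistent Φ ∧
          (∀ Φ', Φ ⊆ Φ' → Φ' ⊆ Ψ → Consistent Φ' → Φ' = Φ) ∧
          T = Cn Φ} :=
  representable_by_normal_empty_objective_iff_general 𝒯
end

section
/- Let P be a set of atoms of L and let W be a consistent set of formulas. Then the family 𝒯_{W,P} = { T : T is inclusion-minimal among all P-complete theories containing W } is representable by a normal prerequisite-free default theory with empty objective part, i.e., there is a set D of prerequisite-free normal defaults with ext(D, ∅) = 𝒯_{W,P}. -/
-- auxiliary development, to be placed before the theorem
namespace Rep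

open PropForm

variable {α : Type}

/-- tautology -/
def taut : PropForm α := PropForm.fls.impl PropForm.fls

def Sat (v : α → Prop) (S : Set (PropForm α)) : Prop := ∀ φ ∈ S, φ.eval v

lemma mem_Cn {S : Set (PropForm α)} {φ : PropForm α} :
    φ ∈ Cn S ↔ ∀ v : α → Prop, Sat v S → φ.eval v := Iff.rfl

lemma subset_Cn (S : Set (PropForm α)) : S ⊆ Cn S :=
  fun φ hφ _ hv => hv φ hφ

lemma Cn_mono {S T : Set (PropForm α)} (h : S ⊆ T) : Cn S ⊆ Cn T :=
  fun φ hφ v hv => hφ v (fun ψ hψ => hv ψ (h hψ))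

lemma sat_Cn {v : α → Prop} {S : Set (PropForm α)} (h : Sat v S) : Sat v (Cn S) :=
  fun φ hφ => hφ v h

lemma Cn_Cn (S : Set (PropForm α)) : Cn (Cn S) = Cn S := by
  apply Set.Subset.antisymm
  · intro φ hφ v hv
    exact hφ v (sat_Cn hv)
  · exact subset_Cn _

lemma eval_neg {v : α → Prop} {φ : PropForm α} : φ.neg.eval v ↔ ¬ φ.eval v := Iff.rfl

lemma eval_conj {v : α → Prop} {φ ψ : PropForm α} :
    (φ.conj ψ).eval v ↔ φ.eval v ∧ ψ.eval v := by
  simp only [PropForm.conj, PropForm.neg, PropForm.eval]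
  tauto

lemma eval_taut {v : α → Prop} : (taut : PropForm α).eval v := fun h => h

lemma taut_mem_Cn (S : Set (PropForm α)) : (taut : PropForm α) ∈ Cn S :=
  fun _ _ => eval_taut

lemma Cn_eq_univ_of_unsat {S : Set (PropForm α)} (h : ¬ ∃ v, Sat v S) :
    Cn S = Set.univ := by
  apply Set.eq_univ_of_forall
  intro φ v hv
  exact absurd ⟨v, hv⟩ h

lemma exists_model_of_ne_univ {S : Set (PropForm α)} (h : Cn S ≠ Set.univ) :
    ∃ v, Sat v S := by
  by_contra hc
  exact h (Cn_eq_univ_of_unsat hc)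

lemma fls_notMem_Cn_of_sat {S : Set (PropForm α)} (h : ∃ v, Sat v S) :
    (PropForm.fls : PropForm α) ∉ Cn S := by
  rcases h with ⟨v, hv⟩
  intro hmem
  exact hmem v hv

/-- list conjunction -/
def listConj : List (PropForm α) → PropForm α
  | [] => taut
  | φ :: L => φ.conj (listConj L)

lemma eval_listConj {v : α → Prop} {L : List (PropForm α)} :
    (listConj L).eval v ↔ ∀ φ ∈ L, φ.eval v := by
  induction L with
  | nil => simp [listConj, eval_taut]
  | cons φ L ih => simp [listConj, eval_conj, ih]

open Classical in
/-- the literal of atom `a` as seen by valuation `u` -/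
noncomputable def lit (u : α → Prop) (a : α) : PropForm α :=
  if u a then PropForm.atom a else (PropForm.atom a).neg

lemma eval_lit {v u : α → Prop} {a : α} : (lit u a).eval v ↔ (v a ↔ u a) := by
  by_cases h : u a <;> simp [lit, h, PropForm.eval, eval_neg]

variable [Denumerable α]

open Classical in
/-- conjunction of the `u`-literals over the atoms of `P` with index `< n` -/
noncomputable def gfm (P : Set α) (u : α → Prop) (n : ℕ) : PropForm α :=
  listConj ((List.range n).map fun i =>
    if (Denumerable.ofNat α i) ∈ P then lit u (Denumerable.ofNat α i) else taut)

lemma eval_gfm {P : Set α} {v u : α → Prop} {n : ℕ} :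
    (gfm P u n).eval v ↔ ∀ i < n, Denumerable.ofNat α i ∈ P →
      (v (Denumerable.ofNat α i) ↔ u (Denumerable.ofNat α i)) := by
  classical
  simp only [gfm, eval_listConj, List.mem_map, List.mem_range]
  constructor
  · intro h i hi hP
    have := h _ ⟨i, hi, rfl⟩
    rw [if_pos hP] at this
    exact eval_lit.mp this
  · rintro h φ ⟨i, hi, rfl⟩
    by_cases hP : Denumerable.ofNat α i ∈ P
    · rw [if_pos hP]; exact eval_lit.mpr (h i hi hP)
    · rw [if_neg hP]; exact eval_taut

lemma gfm_zero {P : Set α} {u : α → Prop} : gfm P u 0 = listConj [] := by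
  simp [gfm]

lemma eval_gfm_agree {P : Set α} {v u : α → Prop} {n : ℕ}
    (h : ∀ a ∈ P, Encodable.encode a < n → (v a ↔ u a)) :
    (gfm P u n).eval v := by
  rw [eval_gfm]
  intro i hi hP
  -- encode (ofNat α i) = i
  have : Encodable.encode (Denumerable.ofNat α i) = i := Denumerable.encode_ofNat i
  exact h _ hP (by rw [this]; exact hi)

lemma agree_of_eval_gfm {P : Set α} {v u : α → Prop} {n : ℕ}
    (h : (gfm P u n).eval v) {a : α} (ha : a ∈ P) (hn : Encodable.encode a < n) :
    (v a ↔ u a) := by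
  rw [eval_gfm] at h
  have := h (Encodable.encode a) hn
  rw [Denumerable.ofNat_encode] at this
  exact this ha

end Rep
namespace Rep

open PropForm

variable {α : Type} [Denumerable α]

lemma eval_ultra (f : ℕ → α → Prop) (U : Ultrafilter ℕ) (φ : PropForm α) :
    φ.eval (fun a => {n | f n a} ∈ U) ↔ {n | φ.eval (f n)} ∈ U := by
  induction φ with
  | atom a => exact Iff.rfl
  | fls =>
    simp only [PropForm.eval]
    constructor
    · exact False.elim
    · intro h
      have he : {n : ℕ | False} = (∅ : Set ℕ) := by ext n; simp
      rw [he] at h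
      exact Filter.empty_notMem (U : Filter ℕ) h
  | impl φ ψ ihφ ihψ =>
    simp only [PropForm.eval]
    rw [ihφ, ihψ]
    constructor
    · intro h
      by_cases hφ : {n | φ.eval (f n)} ∈ U
      · exact Filter.mem_of_superset (h hφ) (fun n hn _ => hn)
      · have hc : {n | φ.eval (f n)}ᶜ ∈ U := (Ultrafilter.compl_mem_iff_notMem).mpr hφ
        exact Filter.mem_of_superset hc (fun n hn hx => absurd hx hn)
    · intro h hφ
      exact Filter.mem_of_superset (Filter.inter_mem h hφ) (fun n hn => hn.1 hn.2)

variable (P : Set α) (W : Set (PropForm α))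

/-- The set of consequents of our defaults. -/
def Cset : Set (PropForm α) :=
  {c | ∃ w ∈ insert taut W, ∃ u : α → Prop, Sat u W ∧ ∃ n : ℕ, c = w.conj (gfm P u n)}

/-- The defaults. -/
def Dset : Set (Default α) :=
  {d | ∃ c ∈ Cset P W, d = ⟨taut, {c}, c⟩}

lemma Dset_normal : ∀ d ∈ Dset P W, d.Normal ∧ d.PrereqFree := by
  rintro d ⟨c, _, rfl⟩
  exact ⟨rfl, taut_mem_Cn ∅⟩

/-- reduct computation -/
lemma cnRules_eq (S : Set (PropForm α)) :
    CnRules (Reduct (Dset P W) S) (∅ : Set (PropForm α)) =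
      Cn {c | c ∈ Cset P W ∧ c.neg ∉ Cn S} := by
  set Z : Set (PropForm α) := {c | c ∈ Cset P W ∧ c.neg ∉ Cn S} with hZ
  apply Set.Subset.antisymm
  · apply Set.sInter_subset_of_mem
    refine ⟨Set.empty_subset _, le_of_eq (Cn_Cn Z), ?_⟩
    rintro r ⟨d, ⟨c, hcC, rfl⟩, hap, rfl⟩ _
    have hneg : c.neg ∉ Cn S := hap c (Finset.mem_singleton_self c)
    exact subset_Cn Z ⟨hcC, hneg⟩
  · intro φ hφ
    rw [CnRules, Set.mem_sInter]
    rintro T ⟨-, hTcl, hTrules⟩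
    have hZT : Z ⊆ T := by
      rintro c ⟨hcC, hneg⟩
      have hr : ((taut : PropForm α), c) ∈ Reduct (Dset P W) S := by
        refine ⟨⟨taut, {c}, c⟩, ⟨c, hcC, rfl⟩, ?_, rfl⟩
        intro γ hγ
        rw [Finset.mem_singleton] at hγ
        subst hγ
        exact hneg
      exact hTrules _ hr (hTcl (taut_mem_Cn T))
    exact hTcl (Cn_mono hZT hφ)

/-- the literals of `v` over `P` -/
def Lits (v : α → Prop) : Set (PropForm α) := {c | ∃ p ∈ P, c = lit v p}

/-- the candidate extension determined by `v` -/
def Sv (v : α → Prop) : Set (PropForm α) := Cn (W ∪ Lits P v)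

lemma sat_gens_self {v : α → Prop} (hv : Sat v W) : Sat v (W ∪ Lits P v) := by
  rintro φ (hφ | ⟨p, hp, rfl⟩)
  · exact hv φ hφ
  · exact eval_lit.mpr Iff.rfl

lemma cset_eval_of_model {v : α → Prop} (hv : Sat v W) {c : PropForm α}
    (hc : c ∈ Cset P W) {m : α → Prop} (hm : Sat m (W ∪ Lits P v))
    (hmc : c.eval m) : c.eval v := by
  obtain ⟨w, hw, u, hu, n, rfl⟩ := hc
  rw [eval_conj] at hmc ⊢
  constructor
  · rcases Set.mem_insert_iff.mp hw with h | h
    · rw [h]; exact eval_taut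
    · exact hv w h
  · rw [eval_gfm] at hmc ⊢
    intro i hi hiP
    have h1 : m (Denumerable.ofNat α i) ↔ u (Denumerable.ofNat α i) := hmc.2 i hi hiP
    have h2 : m (Denumerable.ofNat α i) ↔ v (Denumerable.ofNat α i) :=
      eval_lit.mp (hm (lit v (Denumerable.ofNat α i)) (Or.inr ⟨_, hiP, rfl⟩))
    rw [← h2, h1]

lemma cset_mem_Sv {v : α → Prop} (hv : Sat v W) {c : PropForm α}
    (hc : c ∈ Cset P W) (hcv : c.eval v) : c ∈ Sv P W v := by
  intro m hm
  obtain ⟨w, hw, u, hu, n, rfl⟩ := hc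
  rw [eval_conj] at hcv ⊢
  constructor
  · rcases Set.mem_insert_iff.mp hw with h | h
    · rw [h]; exact eval_taut
    · exact hm w (Or.inl h)
  · rw [eval_gfm] at hcv ⊢
    intro i hi hiP
    have h1 : v (Denumerable.ofNat α i) ↔ u (Denumerable.ofNat α i) := hcv.2 i hi hiP
    have h2 : m (Denumerable.ofNat α i) ↔ v (Denumerable.ofNat α i) :=
      eval_lit.mp (hm (lit v (Denumerable.ofNat α i)) (Or.inr ⟨_, hiP, rfl⟩))
    rw [h2, h1]

lemma Cn_Cv_eq_Sv {v : α → Prop} (hv : Sat v W) :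
    Cn {c | c ∈ Cset P W ∧ c.eval v} = Sv P W v := by
  apply Set.Subset.antisymm
  · have h1 : {c | c ∈ Cset P W ∧ c.eval v} ⊆ Sv P W v :=
      fun c hc => cset_mem_Sv P W hv hc.1 hc.2
    have := Cn_mono h1
    rwa [show Cn (Sv P W v) = Sv P W v from Cn_Cn _] at this
  · have hgen : W ∪ Lits P v ⊆ Cn {c | c ∈ Cset P W ∧ c.eval v} := by
      rintro φ (hφ | ⟨p, hp, rfl⟩)
      · -- φ ∈ W
        have hcC : φ.conj (gfm P v 0) ∈ Cset P W :=
          ⟨φ, Set.mem_insert_of_mem _ hφ, v, hv, 0, rfl⟩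
        have hcv : (φ.conj (gfm P v 0)).eval v := by
          rw [eval_conj, eval_gfm]
          exact ⟨hv φ hφ, fun i hi _ => absurd hi (Nat.not_lt_zero i)⟩
        intro m hm
        exact (eval_conj.mp (hm _ ⟨hcC, hcv⟩)).1
      · -- literal
        have hcC : (taut : PropForm α).conj (gfm P v (Encodable.encode p + 1)) ∈ Cset P W :=
          ⟨taut, Set.mem_insert _ _, v, hv, _, rfl⟩
        have hcv : ((taut : PropForm α).conj (gfm P v (Encodable.encode p + 1))).eval v := by
          rw [eval_conj]
          exact ⟨eval_taut, eval_gfm_agree (fun a _ _ => Iff.rfl)⟩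
        intro m hm
        have := eval_conj.mp (hm _ ⟨hcC, hcv⟩)
        have hag : m p ↔ v p :=
          agree_of_eval_gfm this.2 hp (Nat.lt_succ_self _)
        exact eval_lit.mpr hag
    intro φ hφ
    have : Cn (W ∪ Lits P v) ⊆ Cn (Cn {c | c ∈ Cset P W ∧ c.eval v}) := Cn_mono hgen
    rw [Cn_Cn] at this
    exact this hφ

lemma neg_mem_Sv_iff {v : α → Prop} (hv : Sat v W) {c : PropForm α}
    (hc : c ∈ Cset P W) : c.neg ∉ Sv P W v ↔ c.eval v := by
  constructor
  · intro h
    have : ¬ ∀ m : α → Prop, Sat m (W ∪ Lits P v) → c.neg.eval m := h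
    push_neg at this
    obtain ⟨m, hm, hmne⟩ := this
    have hmc : c.eval m := by
      by_contra hx
      exact hmne hx
    exact cset_eval_of_model P W hv hc hm hmc
  · intro hcv hneg
    exact (hneg v (sat_gens_self P W hv)) hcv

lemma isExtension_Sv {v : α → Prop} (hv : Sat v W) :
    IsExtension (Dset P W) (∅ : Set (PropForm α)) (Sv P W v) := by
  rw [IsExtension, cnRules_eq]
  have h1 : {c | c ∈ Cset P W ∧ c.neg ∉ Cn (Sv P W v)} = {c | c ∈ Cset P W ∧ c.eval v} := by
    ext c
    constructor
    · rintro ⟨hcC, hneg⟩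
      rw [show Cn (Sv P W v) = Sv P W v from Cn_Cn _] at hneg
      exact ⟨hcC, (neg_mem_Sv_iff P W hv hcC).mp hneg⟩
    · rintro ⟨hcC, hcv⟩
      refine ⟨hcC, ?_⟩
      rw [show Cn (Sv P W v) = Sv P W v from Cn_Cn _]
      exact (neg_mem_Sv_iff P W hv hcC).mpr hcv
  rw [h1, Cn_Cv_eq_Sv P W hv]

end Rep
namespace Rep

open PropForm

variable {α : Type} [Denumerable α] (P : Set α) (W : Set (PropForm α))

lemma Sv_isTheory (v : α → Prop) : IsTheory (Sv P W v) := (Cn_Cn _).subset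

lemma Sv_complete (v : α → Prop) :
    ∀ p ∈ P, PropForm.atom p ∈ Sv P W v ∨ (PropForm.atom p).neg ∈ Sv P W v := by
  intro p hp
  by_cases hvp : v p
  · left
    intro m hm
    exact (eval_lit.mp (hm _ (Or.inr ⟨p, hp, rfl⟩))).mpr hvp
  · right
    intro m hm
    exact fun hmp => hvp ((eval_lit.mp (hm _ (Or.inr ⟨p, hp, rfl⟩))).mp hmp)

lemma Sv_W_sub (v : α → Prop) : W ⊆ Sv P W v :=
  fun w hw => subset_Cn _ (Or.inl hw)

lemma lit_eq_atom {v : α → Prop} {p : α} (h : v p) : lit v p = PropForm.atom p := by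
  simp only [lit]; rw [if_pos h]

lemma lit_eq_neg {v : α → Prop} {p : α} (h : ¬ v p) : lit v p = (PropForm.atom p).neg := by
  simp only [lit]; rw [if_neg h]

lemma Sv_subset_of_complete {v : α → Prop} {T' : Set (PropForm α)}
    (hTh : IsTheory T')
    (hcomp : ∀ p ∈ P, PropForm.atom p ∈ T' ∨ (PropForm.atom p).neg ∈ T')
    (hWT : W ⊆ T') (hvT : Sat v T') : Sv P W v ⊆ T' := by
  have hgen : W ∪ Lits P v ⊆ T' := by
    rintro φ (hφ | ⟨p, hp, rfl⟩)
    · exact hWT hφ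
    · rcases hcomp p hp with h | h
      · have hvp : v p := hvT _ h
        rw [lit_eq_atom hvp]; exact h
      · have hvp : ¬ v p := fun hx => (hvT _ h) hx
        rw [lit_eq_neg hvp]; exact h
  intro φ hφ
  exact hTh (Cn_mono hgen hφ)

lemma Sv_minimal {v : α → Prop} (hv : Sat v W) :
    ∀ T' : Set (PropForm α), IsTheory T' →
      (∀ p ∈ P, PropForm.atom p ∈ T' ∨ (PropForm.atom p).neg ∈ T') →
      W ⊆ T' → T' ⊆ Sv P W v → T' = Sv P W v := by
  intro T' hTh hcomp hWT hsub
  have hvS : Sat v (Sv P W v) := sat_Cn (sat_gens_self P W hv)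
  have hvT : Sat v T' := fun φ hφ => hvS φ (hsub hφ)
  exact Set.Subset.antisymm hsub (Sv_subset_of_complete P W hTh hcomp hWT hvT)

/-- every element of the target family is of the form `Sv` -/
lemma target_eq_Sv (hWc : Consistent W) {T : Set (PropForm α)}
    (hTh : IsTheory T)
    (hcomp : ∀ p ∈ P, PropForm.atom p ∈ T ∨ (PropForm.atom p).neg ∈ T)
    (hWT : W ⊆ T)
    (hmin : ∀ T' : Set (PropForm α), IsTheory T' →
      (∀ p ∈ P, PropForm.atom p ∈ T' ∨ (PropForm.atom p).neg ∈ T') →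
      W ⊆ T' → T' ⊆ T → T' = T) :
    ∃ v, Sat v W ∧ T = Sv P W v := by
  obtain ⟨v₀, hv₀⟩ := exists_model_of_ne_univ hWc
  have hTne : T ≠ Set.univ := by
    intro hu
    have hsub : Sv P W v₀ ⊆ T := by rw [hu]; exact Set.subset_univ _
    have heq : Sv P W v₀ = T :=
      hmin _ (Sv_isTheory P W v₀) (Sv_complete P W v₀) (Sv_W_sub P W v₀) hsub
    have : (PropForm.fls : PropForm α) ∉ Sv P W v₀ :=
      fls_notMem_Cn_of_sat ⟨v₀, sat_gens_self P W hv₀⟩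
    rw [heq, hu] at this
    exact this (Set.mem_univ _)
  have hCnT : Cn T ≠ Set.univ := by
    intro h
    exact hTne (Set.eq_univ_of_univ_subset (h ▸ hTh))
  obtain ⟨v, hvT⟩ := exists_model_of_ne_univ hCnT
  have hvW : Sat v W := fun w hw => hvT w (hWT hw)
  have hsub : Sv P W v ⊆ T := Sv_subset_of_complete P W hTh hcomp hWT hvT
  exact ⟨v, hvW, (hmin _ (Sv_isTheory P W v) (Sv_complete P W v) (Sv_W_sub P W v) hsub).symm⟩

/-- every extension is of the form `Sv` for a model of `W` -/
lemma extension_eq_Sv (hWc : Consistent W) {S : Set (PropForm α)}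
    (hSx : IsExtension (Dset P W) (∅ : Set (PropForm α)) S) :
    ∃ v, Sat v W ∧ S = Sv P W v := by
  have hS : S = CnRules (Reduct (Dset P W) S) ∅ := hSx
  rw [cnRules_eq] at hS
  set Z : Set (PropForm α) := {c | c ∈ Cset P W ∧ c.neg ∉ Cn S} with hZdef
  have hCnS : Cn S = S := by rw [hS, Cn_Cn]
  have hSne : S ≠ Set.univ := by
    intro hu
    have hZe : Z = ∅ := by
      apply Set.eq_empty_iff_forall_notMem.mpr
      rintro c ⟨-, hneg⟩
      exact hneg (by rw [hCnS, hu]; exact Set.mem_univ _)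
    have hfls : (PropForm.fls : PropForm α) ∈ S := by rw [hu]; exact Set.mem_univ _
    rw [hS, hZe] at hfls
    exact fls_notMem_Cn_of_sat
      ⟨fun _ => True, fun φ hφ => absurd hφ (Set.notMem_empty φ)⟩ hfls
  obtain ⟨v, hvZ⟩ : ∃ v, Sat v Z := by
    by_contra h
    exact hSne (by rw [hS, Cn_eq_univ_of_unsat h])
  have hZeq : Z = {c | c ∈ Cset P W ∧ c.eval v} := by
    ext c
    constructor
    · intro hc
      exact ⟨hc.1, hvZ c hc⟩
    · rintro ⟨hcC, hcv⟩
      refine ⟨hcC, fun hneg => ?_⟩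
      rw [hCnS, hS] at hneg
      exact (sat_Cn hvZ _ hneg) hcv
  have hvW : Sat v W := by
    by_contra hnW
    obtain ⟨w₀, hw₀W, hw₀v⟩ : ∃ w₀ ∈ W, ¬ w₀.eval v := by
      unfold Sat at hnW
      push_neg at hnW
      exact hnW
    have hustar : ∃ u : α → Prop, Sat u W ∧ ∀ c ∈ Z, c.eval u := by
      by_cases hall : ∀ n : ℕ, ∃ u : α → Prop, Sat u W ∧
          ∀ a ∈ P, Encodable.encode a < n → (u a ↔ v a)
      · -- unbounded case: compactness via ultrafilter
        choose f hfW hfag using hall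
        haveI : (Filter.atTop : Filter ℕ).NeBot := Filter.atTop_neBot
        set U : Ultrafilter ℕ := Ultrafilter.of Filter.atTop with hU
        set u : α → Prop := fun a => {n | f n a} ∈ U with hu
        have huW : Sat u W :=
          fun w hw => (eval_ultra f U w).mpr (Filter.univ_mem' (fun n => hfW n w hw))
        have huag : ∀ a ∈ P, (u a ↔ v a) := by
          intro a ha
          have htail : {n : ℕ | Encodable.encode a < n} ∈ (U : Filter ℕ) :=
            Ultrafilter.of_le _ (Filter.eventually_gt_atTop (Encodable.encode a))
          by_cases hva : v a
          · have hm : {n | f n a} ∈ U :=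
              Filter.mem_of_superset htail (fun n hn => (hfag n a ha hn).mpr hva)
            exact iff_of_true hm hva
          · have hm : {n | f n a}ᶜ ∈ U :=
              Filter.mem_of_superset htail (fun n hn hfn => hva ((hfag n a ha hn).mp hfn))
            exact iff_of_false (Ultrafilter.compl_mem_iff_notMem.mp hm) hva
        refine ⟨u, huW, ?_⟩
        intro c hc
        rw [hZeq] at hc
        obtain ⟨hcC, hcv⟩ := hc
        obtain ⟨w, hw, u', hu', n, rfl⟩ := hcC
        rw [eval_conj] at hcv ⊢
        obtain ⟨hcvw, hcvg⟩ := hcv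
        rw [eval_gfm] at hcvg ⊢
        refine ⟨?_, ?_⟩
        · rcases Set.mem_insert_iff.mp hw with h | h
          · rw [h]; exact eval_taut
          · exact huW w h
        · intro i hi hiP
          exact (huag _ hiP).trans (hcvg i hi hiP)
      · -- bounded case
        rw [not_forall] at hall
        have h0 : ∃ u : α → Prop, Sat u W ∧
            ∀ a ∈ P, Encodable.encode a < 0 → (u a ↔ v a) := by
          obtain ⟨v₀, hv₀⟩ := exists_model_of_ne_univ hWc
          exact ⟨v₀, hv₀, fun a _ h => absurd h (Nat.not_lt_zero _)⟩
        obtain ⟨n₀, hn₀, hmin⟩ : ∃ n₀ : ℕ, (¬ ∃ u : α → Prop, Sat u W ∧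
            ∀ a ∈ P, Encodable.encode a < n₀ → (u a ↔ v a)) ∧
            ∀ m < n₀, ∃ u : α → Prop, Sat u W ∧
              ∀ a ∈ P, Encodable.encode a < m → (u a ↔ v a) := by
          classical
          exact ⟨Nat.find hall, Nat.find_spec hall,
            fun m hm => not_not.mp (Nat.find_min hall hm)⟩
        have hn₀pos : 0 < n₀ :=
          Nat.pos_of_ne_zero (fun h => (h ▸ hn₀) h0)
        obtain ⟨u, huW, huag⟩ := hmin (n₀ - 1) (Nat.sub_lt hn₀pos one_pos)
        refine ⟨u, huW, ?_⟩
        intro c hc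
        rw [hZeq] at hc
        obtain ⟨hcC, hcv⟩ := hc
        obtain ⟨w, hw, u', hu', n, rfl⟩ := hcC
        rw [eval_conj] at hcv ⊢
        obtain ⟨hcvw, hcvg⟩ := hcv
        have hagvu' : ∀ a ∈ P, Encodable.encode a < n → (u' a ↔ v a) := by
          intro a ha hlt
          exact (agree_of_eval_gfm hcvg ha hlt).symm
        have hnle : n ≤ n₀ - 1 := by
          by_contra hgt
          push_neg at hgt
          apply hn₀
          refine ⟨u', hu', fun a ha hlt => hagvu' a ha ?_⟩
          omega
        rw [eval_gfm] at hcvg ⊢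
        refine ⟨?_, ?_⟩
        · rcases Set.mem_insert_iff.mp hw with h | h
          · rw [h]; exact eval_taut
          · exact huW w h
        · intro i hi hiP
          have h1 : u (Denumerable.ofNat α i) ↔ v (Denumerable.ofNat α i) := by
            apply huag _ hiP
            rw [Denumerable.encode_ofNat]
            omega
          exact h1.trans (hcvg i hi hiP)
    obtain ⟨u, huW, huZ⟩ := hustar
    have hc₀C : w₀.conj (gfm P u 0) ∈ Cset P W :=
      ⟨w₀, Set.mem_insert_of_mem _ hw₀W, u, huW, 0, rfl⟩
    have hc₀notZ : w₀.conj (gfm P u 0) ∉ Z := by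
      rw [hZeq]
      rintro ⟨-, h⟩
      exact hw₀v (eval_conj.mp h).1
    have hnegmem : (w₀.conj (gfm P u 0)).neg ∈ Cn S := by
      by_contra h
      exact hc₀notZ ⟨hc₀C, h⟩
    rw [hCnS, hS] at hnegmem
    have hcontra : (w₀.conj (gfm P u 0)).neg.eval u := hnegmem u (fun c hc => huZ c hc)
    apply hcontra
    rw [eval_conj, eval_gfm]
    exact ⟨huW w₀ hw₀W, fun i hi _ => absurd hi (Nat.not_lt_zero _)⟩
  refine ⟨v, hvW, ?_⟩
  rw [hS, hZeq, Cn_Cv_eq_Sv P W hvW]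

end Rep
/-- the family of inclusion-minimal `P`-complete theories containing a
consistent `W` is representable by a normal prerequisite-free default theory with
empty objective part. -/
theorem minimal_P_complete_representable {α : Type} [Denumerable α]
    (P : Set α) (W : Set (PropForm α)) (hW : Consistent W) :
    ∃ D : Set (Default α), (∀ d ∈ D, d.Normal ∧ d.PrereqFree) ∧
      ext D (∅ : Set (PropForm α)) =
        {T | IsTheory T ∧ (∀ p ∈ P, PropForm.atom p ∈ T ∨ (PropForm.atom p).neg ∈ T) ∧
          W ⊆ T ∧
          ∀ T' : Set (PropForm α), IsTheory T' →
            (∀ p ∈ P, PropForm.atom p ∈ T' ∨ (PropForm.atom p).neg ∈ T') →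
            W ⊆ T' → T' ⊆ T → T' = T} := by
  refine ⟨Rep.Dset P W, Rep.Dset_normal P W, ?_⟩
  ext S
  constructor
  · intro hS
    obtain ⟨v, hvW, rfl⟩ := Rep.extension_eq_Sv P W hW hS
    exact ⟨Rep.Sv_isTheory P W v, Rep.Sv_complete P W v, Rep.Sv_W_sub P W v,
      Rep.Sv_minimal P W hvW⟩
  · rintro ⟨hTh, hcomp, hWT, hmin⟩
    obtain ⟨v, hvW, rfl⟩ := Rep.target_eq_Sv P W hW hTh hcomp hWT hmin
    exact Rep.isExtension_Sv P W hvW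
end

section
/- For every normal default theory (D,W) over a propositional language L there exist a propositional language L' ⊇ L (obtained by adding new atoms), a set P of atoms of L', and a set W' ⊆ L' of formulas such that (D,W) is semi-equivalent to the default theory (D^{CWA^P}, W'), where D^{CWA^P} = { :{¬p}/¬p : p ∈ P }; that is, ext(D,W) = { T ∩ L : T ∈ ext(D^{CWA^P}, W') }. -/
namespace CWAAux
open PropForm

variable {α : Type}

def Models (v : α → Prop) (S : Set (PropForm α)) : Prop := ∀ ψ ∈ S, ψ.eval v
def Sat (S : Set (PropForm α)) : Prop := ∃ v, Models v S

lemma mem_Cn {S : Set (PropForm α)} {φ} : φ ∈ Cn S ↔ ∀ v, Models v S → φ.eval v := Iff.rfl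

lemma subset_Cn (S : Set (PropForm α)) : S ⊆ Cn S := fun φ hφ v hv => hv φ hφ

lemma Cn_mono {S T : Set (PropForm α)} (h : S ⊆ T) : Cn S ⊆ Cn T :=
  fun φ hφ v hv => hφ v (fun ψ hψ => hv ψ (h hψ))

lemma models_Cn {v : α → Prop} {S} (h : Models v S) : Models v (Cn S) := fun ψ hψ => hψ v h

lemma Cn_Cn (S : Set (PropForm α)) : Cn (Cn S) = Cn S :=
  Set.Subset.antisymm (fun φ hφ v hv => hφ v (models_Cn hv)) (subset_Cn _)

lemma eval_map {β : Type} (f : α → β) (φ : PropForm α) (v : β → Prop) :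
    (φ.map f).eval v ↔ φ.eval (v ∘ f) := by
  induction φ <;> simp [PropForm.map, PropForm.eval, *]

lemma eval_neg {φ : PropForm α} {v : α → Prop} : φ.neg.eval v ↔ ¬ φ.eval v := by
  simp [PropForm.neg, PropForm.eval]

lemma eval_negneg {φ : PropForm α} {v : α → Prop} : φ.neg.neg.eval v ↔ φ.eval v := by
  simp [PropForm.neg, PropForm.eval]

lemma not_sat_iff {S : Set (PropForm α)} : ¬ Sat S ↔ Cn S = Set.univ := by
  constructor
  · intro h
    apply Set.eq_univ_of_forall
    intro φ v hv
    exact absurd ⟨v, hv⟩ h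
  · rintro h ⟨v, hv⟩
    have : (fls : PropForm α) ∈ Cn S := h ▸ Set.mem_univ _
    exact this v hv

lemma Cn_univ : Cn (Set.univ : Set (PropForm α)) = Set.univ := by
  apply Set.eq_univ_of_forall
  intro φ v hv
  exact absurd (hv fls (Set.mem_univ _)) id

/-! Encoding and countability -/

def encF [Encodable α] : PropForm α → ℕ
  | PropForm.atom a => Nat.pair 0 (Encodable.encode a)
  | PropForm.fls => Nat.pair 1 0
  | PropForm.impl φ ψ => Nat.pair 2 (Nat.pair (encF φ) (encF ψ))

lemma encF_inj [Encodable α] : Function.Injective (encF (α := α)) := by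
  intro x
  induction x with
  | atom a =>
    intro y h
    cases y <;> simp [encF, Nat.pair_eq_pair] at h
    exact congrArg PropForm.atom h
  | fls =>
    intro y h
    cases y <;> simp [encF, Nat.pair_eq_pair] at h
    rfl
  | impl φ ψ ih1 ih2 =>
    intro y h
    cases y <;> simp [encF, Nat.pair_eq_pair] at h
    rw [ih1 h.1, ih2 h.2]

instance [Encodable α] : Countable (PropForm α) :=
  (countable_iff_exists_injective _).2 ⟨encF, encF_inj⟩

instance : Nonempty (PropForm α) := ⟨fls⟩

/-! Finite satisfiability and compactness -/

def FinSat (S : Set (PropForm α)) : Prop :=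
  ∀ F : Finset (PropForm α), ↑F ⊆ S → Sat (↑F : Set (PropForm α))

lemma finset_subset_chain {X : Type} {T : ℕ → Set X} (mono : Monotone T)
    (F : Finset X) (h : ↑F ⊆ ⋃ n, T n) : ∃ n, ↑F ⊆ T n := by
  classical
  induction F using Finset.induction_on with
  | empty => exact ⟨0, by simp⟩
  | @insert x F hx ih =>
    have h1 : ↑F ⊆ ⋃ n, T n := by
      intro y hy
      exact h (by simpa using Or.inr (Finset.mem_coe.1 hy))
    obtain ⟨n, hn⟩ := ih h1
    obtain ⟨m, hm⟩ := Set.mem_iUnion.1 (h (Finset.mem_coe.2 (Finset.mem_insert_self x F)))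
    refine ⟨max n m, ?_⟩
    intro y hy
    rcases Finset.mem_insert.1 (Finset.mem_coe.1 hy) with rfl | hy'
    · exact mono (le_max_right n m) hm
    · exact mono (le_max_left n m) (hn (Finset.mem_coe.2 hy'))

lemma finsat_insert {S : Set (PropForm α)} (h : FinSat S) (φ : PropForm α) :
    FinSat (insert φ S) ∨ FinSat (insert φ.neg S) := by
  classical
  by_contra hc
  push_neg at hc
  obtain ⟨hc1, hc2⟩ := hc
  rw [FinSat] at hc1 hc2
  push_neg at hc1 hc2
  obtain ⟨F1, hF1, hs1⟩ := hc1
  obtain ⟨F2, hF2, hs2⟩ := hc2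
  have hG : ↑((F1.erase φ) ∪ (F2.erase φ.neg)) ⊆ S := by
    intro x hx
    rcases Finset.mem_union.1 (by exact_mod_cast hx) with hx' | hx'
    · rcases hF1 (Finset.mem_coe.2 (Finset.mem_of_mem_erase hx')) with h' | h'
      · exact absurd h' (Finset.ne_of_mem_erase hx')
      · exact h'
    · rcases hF2 (Finset.mem_coe.2 (Finset.mem_of_mem_erase hx')) with h' | h'
      · exact absurd h' (Finset.ne_of_mem_erase hx')
      · exact h'
  obtain ⟨v, hv⟩ := h _ hG
  by_cases hφ : φ.eval v
  · refine hs1 ⟨v, ?_⟩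
    intro ψ hψ
    by_cases hψφ : ψ = φ
    · exact hψφ ▸ hφ
    · exact hv ψ (by
        refine Finset.mem_coe.2 (Finset.mem_union_left _ ?_)
        exact Finset.mem_erase.2 ⟨hψφ, Finset.mem_coe.1 hψ⟩)
  · refine hs2 ⟨v, ?_⟩
    intro ψ hψ
    by_cases hψφ : ψ = φ.neg
    · exact hψφ ▸ (eval_neg.2 hφ)
    · exact hv ψ (by
        refine Finset.mem_coe.2 (Finset.mem_union_right _ ?_)
        exact Finset.mem_erase.2 ⟨hψφ, Finset.mem_coe.1 hψ⟩)


theorem compactness [Encodable α] {S : Set (PropForm α)} (h : FinSat S) : Sat S := by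
  classical
  obtain ⟨g, hg⟩ := exists_surjective_nat (PropForm α)
  let Ch : ℕ → Set (PropForm α) := fun n => Nat.rec S
    (fun m prev => if FinSat (insert (g m) prev) then insert (g m) prev
                   else insert (g m).neg prev) n
  have hsucc : ∀ m, Ch (m+1) = if FinSat (insert (g m) (Ch m)) then insert (g m) (Ch m)
      else insert (g m).neg (Ch m) := fun m => rfl
  have hfs : ∀ n, FinSat (Ch n) := by
    intro n
    induction n with
    | zero => exact h
    | succ m ih =>
      rw [hsucc m]
      by_cases hc : FinSat (insert (g m) (Ch m))
      · rwa [if_pos hc]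
      · rw [if_neg hc]
        rcases finsat_insert ih (g m) with h' | h'
        · exact absurd h' hc
        · exact h'
  have hmono : Monotone Ch := by
    apply monotone_nat_of_le_succ
    intro m
    rw [hsucc m]
    by_cases hc : FinSat (insert (g m) (Ch m))
    · rw [if_pos hc]; exact Set.subset_insert _ _
    · rw [if_neg hc]; exact Set.subset_insert _ _
  set U := ⋃ n, Ch n with hU
  have hSU : S ⊆ U := Set.subset_iUnion_of_subset 0 (by exact subset_rfl)
  have hfsU : FinSat U := by
    intro F hF
    obtain ⟨n, hn⟩ := finset_subset_chain hmono F hF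
    exact hfs n F hn
  have hcomp : ∀ φ : PropForm α, φ ∈ U ∨ φ.neg ∈ U := by
    intro φ
    obtain ⟨m, rfl⟩ := hg φ
    rw [hU]
    by_cases hc : FinSat (insert (g m) (Ch m))
    · left
      exact Set.mem_iUnion.2 ⟨m+1, by rw [hsucc m, if_pos hc]; exact Set.mem_insert _ _⟩
    · right
      exact Set.mem_iUnion.2 ⟨m+1, by rw [hsucc m, if_neg hc]; exact Set.mem_insert _ _⟩
  -- pairs and triples from U are satisfiable
  have hsat2 : ∀ φ ψ : PropForm α, φ ∈ U → ψ ∈ U → ∃ v, φ.eval v ∧ ψ.eval v := by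
    intro φ ψ hφ hψ
    obtain ⟨v, hv⟩ := hfsU {φ, ψ} (by
      intro x hx
      rcases Finset.mem_insert.1 (Finset.mem_coe.1 hx) with rfl | hx'
      · exact hφ
      · rw [Finset.mem_singleton.1 hx']; exact hψ)
    exact ⟨v, hv φ (by simp), hv ψ (by simp)⟩
  have hsat3 : ∀ φ ψ χ : PropForm α, φ ∈ U → ψ ∈ U → χ ∈ U →
      ∃ v, φ.eval v ∧ ψ.eval v ∧ χ.eval v := by
    intro φ ψ χ hφ hψ hχ
    obtain ⟨v, hv⟩ := hfsU {φ, ψ, χ} (by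
      intro x hx
      rcases Finset.mem_insert.1 (Finset.mem_coe.1 hx) with rfl | hx'
      · exact hφ
      rcases Finset.mem_insert.1 hx' with rfl | hx''
      · exact hψ
      · rw [Finset.mem_singleton.1 hx'']; exact hχ)
    exact ⟨v, hv φ (by simp), hv ψ (by simp), hv χ (by simp)⟩
  have hnoboth : ∀ φ : PropForm α, φ ∈ U → φ.neg ∈ U → False := by
    intro φ h1 h2
    obtain ⟨v, hv1, hv2⟩ := hsat2 φ φ.neg h1 h2
    exact (eval_neg.1 hv2) hv1
  have hflsnot : (fls : PropForm α) ∉ U := by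
    intro h1
    obtain ⟨v, hv, -⟩ := hsat2 fls fls h1 h1
    exact hv
  have himpl : ∀ φ ψ : PropForm α, (φ.impl ψ ∈ U ↔ (φ ∈ U → ψ ∈ U)) := by
    intro φ ψ
    constructor
    · intro h1 h2
      rcases hcomp ψ with h3 | h3
      · exact h3
      · obtain ⟨v, hv1, hv2, hv3⟩ := hsat3 _ _ _ h1 h2 h3
        exact absurd (hv1 hv2) (eval_neg.1 hv3)
    · intro h1
      rcases hcomp (φ.impl ψ) with h2 | h2
      · exact h2
      rcases hcomp φ with h3 | h3
      · obtain ⟨v, hv1, hv2⟩ := hsat2 _ _ h2 (h1 h3)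
        exact absurd (fun _ => hv2) (eval_neg.1 hv1)
      · obtain ⟨v, hv1, hv2⟩ := hsat2 _ _ h2 h3
        exact absurd (fun hφ => absurd hφ (eval_neg.1 hv2)) (eval_neg.1 hv1)
  refine ⟨fun a => PropForm.atom a ∈ U, ?_⟩
  have truth : ∀ φ : PropForm α, (φ.eval (fun a => PropForm.atom a ∈ U) ↔ φ ∈ U) := by
    intro φ
    induction φ with
    | atom a => exact Iff.rfl
    | fls => simpa [PropForm.eval] using fun h => hflsnot h
    | impl φ ψ ih1 ih2 =>
      show (φ.eval _ → ψ.eval _) ↔ _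
      rw [ih1, ih2, himpl]
  intro ψ hψ
  exact (truth ψ).2 (hSU hψ)

theorem entail_compact [Encodable α] {S : Set (PropForm α)} {φ : PropForm α}
    (h : φ ∈ Cn S) : ∃ F : Finset (PropForm α), ↑F ⊆ S ∧ φ ∈ Cn (↑F : Set (PropForm α)) := by
  classical
  by_contra hc
  push_neg at hc
  have hfs : FinSat (insert φ.neg S) := by
    intro F hF
    have h2 : ↑(F.erase φ.neg) ⊆ S := by
      intro x hx
      rcases hF (Finset.mem_coe.2 (Finset.mem_of_mem_erase (Finset.mem_coe.1 hx))) with h' | h'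
      · exact absurd h' (Finset.ne_of_mem_erase (Finset.mem_coe.1 hx))
      · exact h'
    have h3 : φ ∉ Cn (↑(F.erase φ.neg) : Set (PropForm α)) := hc _ h2
    rw [mem_Cn] at h3
    push_neg at h3
    obtain ⟨v, hv, hnv⟩ := h3
    refine ⟨v, ?_⟩
    intro ψ hψ
    by_cases hψφ : ψ = φ.neg
    · exact hψφ ▸ (eval_neg.2 hnv)
    · exact hv ψ (Finset.mem_coe.2 (Finset.mem_erase.2 ⟨hψφ, Finset.mem_coe.1 hψ⟩))
  obtain ⟨v, hv⟩ := compactness hfs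
  have hS : Models v S := fun ψ hψ => hv ψ (Set.mem_insert_of_mem _ hψ)
  exact (eval_neg.1 (hv φ.neg (Set.mem_insert _ _))) (h v hS)

lemma chain_Cn [Encodable α] {T : ℕ → Set (PropForm α)} (mono : Monotone T)
    (closed : ∀ n, Cn (T n) ⊆ T n) {φ : PropForm α} (h : φ ∈ Cn (⋃ n, T n)) :
    ∃ n, φ ∈ T n := by
  obtain ⟨F, hF, hφ⟩ := entail_compact h
  obtain ⟨n, hn⟩ := finset_subset_chain mono F hF
  exact ⟨n, closed n (Cn_mono hn hφ)⟩

lemma chain_sat [Encodable α] {T : ℕ → Set (PropForm α)} (mono : Monotone T)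
    (hsat : ∀ n, Sat (T n)) : Sat (⋃ n, T n) := by
  apply compactness
  intro F hF
  obtain ⟨n, hn⟩ := finset_subset_chain mono F hF
  obtain ⟨v, hv⟩ := hsat n
  exact ⟨v, fun ψ hψ => hv ψ (hn hψ)⟩


/-! ### CnRules lemmas -/

lemma W_subset_CnRules (B : Set (PropForm α × PropForm α)) (W : Set (PropForm α)) :
    W ⊆ CnRules B W := fun φ hφ => Set.mem_sInter.2 fun _ hS => hS.1 hφ

lemma Cn_CnRules (B : Set (PropForm α × PropForm α)) (W : Set (PropForm α)) :
    Cn (CnRules B W) ⊆ CnRules B W := by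
  intro φ hφ
  refine Set.mem_sInter.2 fun S hS => ?_
  exact hS.2.1 (Cn_mono (Set.sInter_subset_of_mem hS) hφ)

lemma CnRules_rule {B : Set (PropForm α × PropForm α)} {W : Set (PropForm α)}
    {r} (hr : r ∈ B) (h : r.1 ∈ CnRules B W) : r.2 ∈ CnRules B W := by
  refine Set.mem_sInter.2 fun S hS => ?_
  exact hS.2.2 r hr (Set.mem_sInter.1 h S hS)

lemma CnRules_min {B : Set (PropForm α × PropForm α)} {W S : Set (PropForm α)}
    (h1 : W ⊆ S) (h2 : Cn S ⊆ S) (h3 : ∀ r ∈ B, r.1 ∈ S → r.2 ∈ S) :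
    CnRules B W ⊆ S := Set.sInter_subset_of_mem ⟨h1, h2, h3⟩

lemma Cn_subset_CnRules (B : Set (PropForm α × PropForm α)) (W : Set (PropForm α)) :
    Cn W ⊆ CnRules B W :=
  fun _ hφ => Set.mem_sInter.2 fun _ hS => hS.2.1 (Cn_mono hS.1 hφ)

lemma negfls_tauto (S : Set (PropForm α)) : (fls.neg : PropForm α) ∈ Cn S :=
  fun _ _ h => h

lemma CnRules_prereqFree (B : Set (PropForm α × PropForm α)) (W : Set (PropForm α))
    (h : ∀ r ∈ B, r.1 = (fls.neg : PropForm α)) :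
    CnRules B W = Cn (W ∪ {φ | ∃ r ∈ B, φ = r.2}) := by
  apply Set.Subset.antisymm
  · apply CnRules_min
    · exact fun φ hφ => subset_Cn _ (Set.mem_union_left _ hφ)
    · rw [Cn_Cn]
    · intro r hr _
      exact subset_Cn _ (Set.mem_union_right _ ⟨r, hr, rfl⟩)
  · intro φ hφ
    refine Set.mem_sInter.2 fun S hS => ?_
    have hsub : W ∪ {φ | ∃ r ∈ B, φ = r.2} ⊆ S := by
      rintro x (hx | ⟨r, hr, rfl⟩)
      · exact hS.1 hx
      · exact hS.2.2 r hr (hS.2.1 ((h r hr).symm ▸ negfls_tauto S))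
    exact hS.2.1 (Cn_mono hsub hφ)

/-! ### Countability of defaults -/

instance [Encodable α] : Countable (Default α) := by
  have hinj : Function.Injective
      (fun d : Default α => (d.pre, d.jus, d.con)) := by
    intro a b h
    cases a; cases b
    simp only [Prod.mk.injEq] at h
    simp [h.1, h.2.1, h.2.2]
  exact hinj.countable

instance : Nonempty (Default α) := ⟨⟨fls, ∅, fls⟩⟩

/-! ### Reiter's existence theorem for normal default theories -/

theorem exists_extension [Denumerable α] (D : Set (Default α)) (W : Set (PropForm α))
    (hD : ∀ d ∈ D, d.Normal) (hW : Sat W) : ∃ S, IsExtension D W S := by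
  classical
  obtain ⟨F, hF⟩ := exists_surjective_nat (Default α)
  let T : ℕ → Set (PropForm α) := fun n => Nat.rec (motive := fun _ => Set (PropForm α)) (Cn W)
    (fun m prev =>
      if (F (Nat.unpair m).1) ∈ D ∧ (F (Nat.unpair m).1).pre ∈ prev ∧
          (F (Nat.unpair m).1).con.neg ∉ prev
      then Cn (prev ∪ {(F (Nat.unpair m).1).con}) else prev) n
  have hT0 : T 0 = Cn W := rfl
  have hTs : ∀ m, T (m+1) =
      if (F (Nat.unpair m).1) ∈ D ∧ (F (Nat.unpair m).1).pre ∈ T m ∧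
          (F (Nat.unpair m).1).con.neg ∉ T m
      then Cn (T m ∪ {(F (Nat.unpair m).1).con}) else T m := fun m => rfl
  have hclosed : ∀ n, Cn (T n) ⊆ T n := by
    intro n
    induction n with
    | zero => rw [hT0, Cn_Cn]
    | succ m ih =>
      rw [hTs m]
      by_cases hc : (F (Nat.unpair m).1) ∈ D ∧ (F (Nat.unpair m).1).pre ∈ T m ∧
          (F (Nat.unpair m).1).con.neg ∉ T m
      · rw [if_pos hc, Cn_Cn]
      · rwa [if_neg hc]
  have hmono : Monotone T := by
    apply monotone_nat_of_le_succ
    intro m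
    rw [hTs m]
    by_cases hc : (F (Nat.unpair m).1) ∈ D ∧ (F (Nat.unpair m).1).pre ∈ T m ∧
        (F (Nat.unpair m).1).con.neg ∉ T m
    · rw [if_pos hc]
      exact subset_trans (Set.subset_union_left) (subset_Cn _)
    · rw [if_neg hc]
  have hsatn : ∀ n, Sat (T n) := by
    intro n
    induction n with
    | zero =>
      obtain ⟨v, hv⟩ := hW
      exact ⟨v, models_Cn hv⟩
    | succ m ih =>
      rw [hTs m]
      by_cases hc : (F (Nat.unpair m).1) ∈ D ∧ (F (Nat.unpair m).1).pre ∈ T m ∧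
          (F (Nat.unpair m).1).con.neg ∉ T m
      · rw [if_pos hc]
        set d := F (Nat.unpair m).1 with hd
        have hnc : d.con.neg ∉ Cn (T m) := fun h => hc.2.2 (hclosed m h)
        rw [mem_Cn] at hnc
        push_neg at hnc
        obtain ⟨v, hv, hnv⟩ := hnc
        have hcon : d.con.eval v := by
          by_contra hx
          exact hnv (eval_neg.2 hx)
        refine ⟨v, models_Cn ?_⟩
        rintro ψ (hψ | hψ)
        · exact hv ψ hψ
        · rw [Set.mem_singleton_iff.1 hψ]; exact hcon
      · rwa [if_neg hc]
  set U := ⋃ n, T n with hUdef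
  have hTU : ∀ n, T n ⊆ U := fun n => Set.subset_iUnion_of_subset n subset_rfl
  set E := Cn U with hEdef
  have hUE : U ⊆ E := subset_Cn U
  have hCnE : Cn E = E := Cn_Cn U
  have hsatU : Sat U := chain_sat hmono hsatn
  refine ⟨E, ?_⟩
  have happlied : ∀ m, (F (Nat.unpair m).1) ∈ D → (F (Nat.unpair m).1).pre ∈ T m →
      (F (Nat.unpair m).1).con.neg ∉ T m → (F (Nat.unpair m).1).Applicable E := by
    intro m h1 h2 h3
    set d := F (Nat.unpair m).1 with hd
    have hconU : d.con ∈ U := by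
      apply hTU (m+1)
      rw [hTs m, if_pos ⟨h1, h2, h3⟩]
      exact subset_Cn _ (Set.mem_union_right _ rfl)
    intro γ hγ
    rw [hD d h1] at hγ
    rw [Finset.mem_singleton.1 hγ, hCnE]
    intro hcontra
    obtain ⟨v, hv⟩ := hsatU
    exact (eval_neg.1 (hcontra v hv)) (hv _ hconU)
  apply Set.Subset.antisymm
  · -- E ⊆ CnRules (Reduct D E) W
    have hTS : ∀ n, T n ⊆ CnRules (Reduct D E) W := by
      intro n
      induction n with
      | zero => exact Cn_subset_CnRules _ _
      | succ m ih =>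
        rw [hTs m]
        by_cases hc : (F (Nat.unpair m).1) ∈ D ∧ (F (Nat.unpair m).1).pre ∈ T m ∧
            (F (Nat.unpair m).1).con.neg ∉ T m
        · rw [if_pos hc]
          set d := F (Nat.unpair m).1 with hd
          have hrule : (d.pre, d.con) ∈ Reduct D E :=
            ⟨d, hc.1, happlied m hc.1 hc.2.1 hc.2.2, rfl⟩
          have hcon : d.con ∈ CnRules (Reduct D E) W :=
            CnRules_rule hrule (ih hc.2.1)
          refine subset_trans (Cn_mono ?_) (Cn_CnRules _ _)
          rintro ψ (hψ | hψ)
          · exact ih hψ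
          · rwa [Set.mem_singleton_iff.1 hψ]
        · rwa [if_neg hc]
    have hUS : U ⊆ CnRules (Reduct D E) W := Set.iUnion_subset hTS
    exact subset_trans (Cn_mono hUS) (Cn_CnRules _ _)
  · -- CnRules (Reduct D E) W ⊆ E
    apply CnRules_min
    · exact subset_trans (subset_Cn W) (subset_trans (hT0 ▸ hTU 0) hUE)
    · rw [hCnE]
    · rintro r ⟨d, hdD, happ, rfl⟩ hpre
      obtain ⟨m, hm⟩ := chain_Cn hmono hclosed hpre
      obtain ⟨i, hi⟩ := hF d
      set n := Nat.pair i m with hn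
      have hmn : m ≤ n := Nat.right_le_pair i m
      have hidx : (Nat.unpair n).1 = i := by rw [hn, Nat.unpair_pair]
      have hFd : F (Nat.unpair n).1 = d := by rw [hidx, hi]
      have hprem : d.pre ∈ T n := hmono hmn hm
      have hneg : d.con.neg ∉ T n := by
        intro hcontra
        have : d.con.neg ∈ Cn E := subset_Cn E (hUE (hTU n hcontra))
        have happ' := happ d.con (by rw [hD d hdD]; exact Finset.mem_singleton_self _)
        exact happ' this
      have : d.con ∈ T (n+1) := by
        rw [hTs n, hFd, if_pos ⟨hdD, hprem, hneg⟩]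
        exact subset_Cn _ (Set.mem_union_right _ rfl)
      exact hUE (hTU (n+1) this)


/-! ### CWA default theories -/

def CWAD (P : Set α) : Set (Default α) :=
  {d | ∃ q ∈ P, d = ⟨fls.neg, {(atom q).neg}, (atom q).neg⟩}

def NegSet (P : Set α) (S : Set (PropForm α)) : Set (PropForm α) :=
  {φ | ∃ q ∈ P, ((atom q).neg).neg ∉ Cn S ∧ φ = (atom q).neg}

lemma CWA_ext_iff (P : Set α) (W' S : Set (PropForm α)) :
    IsExtension (CWAD P) W' S ↔ S = Cn (W' ∪ NegSet P S) := by
  unfold IsExtension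
  have h1 : ∀ r ∈ Reduct (CWAD P) S, r.1 = (fls.neg : PropForm α) := by
    rintro r ⟨d, ⟨q, hq, rfl⟩, happ, rfl⟩; rfl
  rw [CnRules_prereqFree _ _ h1]
  have h2 : {φ | ∃ r ∈ Reduct (CWAD P) S, φ = r.2} = NegSet P S := by
    ext φ
    constructor
    · rintro ⟨r, ⟨d, ⟨q, hq, rfl⟩, happ, rfl⟩, rfl⟩
      exact ⟨q, hq, happ _ (Finset.mem_singleton_self _), rfl⟩
    · rintro ⟨q, hq, hcond, rfl⟩
      exact ⟨(fls.neg, (atom q).neg),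
        ⟨⟨fls.neg, {(atom q).neg}, (atom q).neg⟩, ⟨q, hq, rfl⟩,
          fun γ hγ => by rw [Finset.mem_singleton.1 hγ]; exact hcond, rfl⟩, rfl⟩
  rw [h2]

lemma Reduct_univ_empty {D : Set (Default α)} (hD : ∀ d ∈ D, d.Normal) :
    Reduct D (Set.univ : Set (PropForm α)) = ∅ := by
  ext r
  simp only [Set.mem_empty_iff_false, iff_false]
  rintro ⟨d, hd, happ, rfl⟩
  have := happ d.con (by rw [hD d hd]; exact Finset.mem_singleton_self _)
  exact this (by rw [Cn_univ]; trivial)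

lemma Reduct_empty (S : Set (PropForm α)) : Reduct (∅ : Set (Default α)) S = ∅ := by
  ext r
  simp only [Set.mem_empty_iff_false, iff_false]
  rintro ⟨d, hd, -⟩
  exact hd

lemma CnRules_empty (W : Set (PropForm α)) :
    CnRules (∅ : Set (PropForm α × PropForm α)) W = Cn W := by
  rw [CnRules_prereqFree ∅ W (by rintro r ⟨⟩)]
  have h : {φ | ∃ r ∈ (∅ : Set (PropForm α × PropForm α)), φ = r.2}
      = (∅ : Set (PropForm α)) := by ext φ; simp
  rw [h, Set.union_empty]

lemma ext_inconsistent {D : Set (Default α)} {W : Set (PropForm α)}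
    (hD : ∀ d ∈ D, d.Normal) (hW : Cn W = Set.univ) : ext D W = {Set.univ} := by
  ext S
  simp only [Set.mem_singleton_iff]
  constructor
  · intro hS
    have h1 : Cn W ⊆ S := by
      rw [show S = CnRules (Reduct D S) W from hS]
      exact Cn_subset_CnRules _ _
    rw [hW] at h1
    exact Set.eq_univ_of_univ_subset h1
  · rintro rfl
    show IsExtension D W Set.univ
    rw [IsExtension, Reduct_univ_empty hD, CnRules_empty, hW]

lemma ext_empty_D (W : Set (PropForm α)) :
    ext (∅ : Set (Default α)) W = {Cn W} := by
  ext S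
  simp only [Set.mem_singleton_iff]
  show IsExtension ∅ W S ↔ _
  rw [IsExtension, Reduct_empty, CnRules_empty]

lemma extension_closed {D : Set (Default α)} {W S : Set (PropForm α)}
    (hS : IsExtension D W S) : Cn S ⊆ S := by
  calc Cn S = Cn (CnRules (Reduct D S) W) := congrArg Cn hS
  _ ⊆ CnRules (Reduct D S) W := Cn_CnRules _ _
  _ = S := hS.symm

lemma ext_normal_sat {D : Set (Default α)} {W : Set (PropForm α)}
    (hD : ∀ d ∈ D, d.Normal) (hW : Cn W ≠ Set.univ)
    {S : Set (PropForm α)} (hS : IsExtension D W S) : Sat S := by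
  by_contra h
  have h1 : Cn S = Set.univ := not_sat_iff.1 h
  have h3 : S = Set.univ := Set.eq_univ_of_univ_subset (h1 ▸ extension_closed hS)
  rw [h3, IsExtension, Reduct_univ_empty hD, CnRules_empty] at hS
  exact hW hS.symm

/-! ### The main construction -/

theorem main {α : Type} [Denumerable α]
    (D : Set (Default α)) (W : Set (PropForm α)) (hD : ∀ d ∈ D, d.Normal) :
    ∃ (β : Type) (P : Set (α ⊕ β)) (W' : Set (PropForm (α ⊕ β))),
      ext D W =
        {T₀ | ∃ T ∈ ext
            {d : Default (α ⊕ β) | ∃ q ∈ P,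
              d = ⟨PropForm.fls.neg, {(PropForm.atom q).neg}, (PropForm.atom q).neg⟩}
            W',
          T₀ = {φ : PropForm α | PropForm.map Sum.inl φ ∈ T}} := by
  classical
  by_cases hW : Cn W = Set.univ
  · -- inconsistent case
    refine ⟨PEmpty, ∅, PropForm.map Sum.inl '' W, ?_⟩
    have hD' : {d : Default (α ⊕ PEmpty) | ∃ q ∈ (∅ : Set (α ⊕ PEmpty)),
        d = ⟨PropForm.fls.neg, {(PropForm.atom q).neg}, (PropForm.atom q).neg⟩}
        = (∅ : Set (Default (α ⊕ PEmpty))) := by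
      ext d; simp
    rw [ext_inconsistent hD hW, hD', ext_empty_D]
    have hCnW' : Cn (PropForm.map (Sum.inl : α → α ⊕ PEmpty) '' W) = Set.univ := by
      rw [← not_sat_iff]
      rintro ⟨v, hv⟩
      have hsW : Sat W := ⟨v ∘ Sum.inl, fun ψ hψ => (eval_map _ _ _).1 (hv _ ⟨ψ, hψ, rfl⟩)⟩
      exact (not_sat_iff.2 hW) hsW
    rw [hCnW']
    apply Set.ext
    intro S
    simp only [Set.mem_singleton_iff, Set.mem_setOf_eq]
    constructor
    · rintro rfl
      exact ⟨Set.univ, rfl, by ext φ; simp⟩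
    · rintro ⟨T, rfl, rfl⟩
      ext φ; simp
  · -- consistent case
    have hsatW : Sat W := by
      by_contra h
      exact hW (not_sat_iff.1 h)
    set β := {S : Set (PropForm α) // IsExtension D W S} with hβ
    set P : Set (α ⊕ β) := Set.range Sum.inr with hP
    set pA : β → PropForm (α ⊕ β) := fun e => PropForm.atom (Sum.inr e) with hpA
    set WA : Set (PropForm (α ⊕ β)) :=
      {ψ | ∃ (e : β) (φ : PropForm α), φ ∈ e.1 ∧ ψ = ((pA e).neg).impl (φ.map Sum.inl)}
      with hWA
    set WB : Set (PropForm (α ⊕ β)) :=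
      {ψ | ∃ (e e' : β), e ≠ e' ∧ ψ = ((pA e).neg).impl (pA e')} with hWB
    refine ⟨β, P, WA ∪ WB, ?_⟩
    set W' := WA ∪ WB with hW'
    have hDset : {d : Default (α ⊕ β) | ∃ q ∈ P,
        d = ⟨PropForm.fls.neg, {(PropForm.atom q).neg}, (PropForm.atom q).neg⟩}
        = CWAD P := rfl
    rw [hDset]
    have hclosede : ∀ e : β, Cn e.1 ⊆ e.1 := fun e => extension_closed e.2
    have hsate : ∀ e : β, Sat e.1 := fun e => ext_normal_sat hD hW e.2
    have hmodel : ∀ (e : β) (v : α → Prop), Models v e.1 →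
        Models (Sum.elim v (fun e' : β => e' ≠ e)) (W' ∪ {(pA e).neg}) := by
      intro e v hv ψ hψ
      rcases hψ with (hψ | hψ) | hψ
      · obtain ⟨e'', φ, hφ, rfl⟩ := hψ
        intro hante
        have he : e'' = e := not_not.1 (eval_neg.1 hante)
        subst he
        rw [eval_map]
        exact hv φ hφ
      · obtain ⟨e1, e2, hne, rfl⟩ := hψ
        intro hante
        have he : e1 = e := not_not.1 (eval_neg.1 hante)
        subst he
        exact fun h => hne h.symm
      · rw [Set.mem_singleton_iff.1 hψ]
        exact eval_neg.2 (fun h => h rfl)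
    set SE : β → Set (PropForm (α ⊕ β)) := fun e => Cn (W' ∪ {(pA e).neg}) with hSE
    have hWB_mem : ∀ e1 e2 : β, e1 ≠ e2 → ((pA e1).neg).impl (pA e2) ∈ W' :=
      fun e1 e2 h => Set.mem_union_right _ ⟨e1, e2, h, rfl⟩
    have hSE_negneg_mem : ∀ (e e' : β), e ≠ e' →
        (pA e').neg.neg ∈ Cn (W' ∪ {(pA e).neg}) := by
      intro e e' hne v hv
      have h1 := hv _ (Set.mem_union_left _ (hWB_mem e e' hne))
      have h2 := hv _ (Set.mem_union_right _ rfl)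
      exact eval_negneg.2 (h1 h2)
    have hSE_not : ∀ e : β, (pA e).neg.neg ∉ Cn (W' ∪ {(pA e).neg}) := by
      intro e hcon
      obtain ⟨v, hv⟩ := hsate e
      have h1 := hcon _ (hmodel e v hv)
      rw [eval_negneg] at h1
      exact h1 rfl
    have hNegSet : ∀ e : β, NegSet P (SE e) = {(pA e).neg} := by
      intro e
      ext φ
      constructor
      · rintro ⟨q, ⟨e', rfl⟩, hcond, rfl⟩
        have he : e' = e := by
          by_contra hne
          rw [hSE, Cn_Cn] at hcond
          exact hcond (hSE_negneg_mem e e' (fun h => hne h.symm))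
        rw [he]; rfl
      · intro hφ
        rw [Set.mem_singleton_iff] at hφ
        subst hφ
        refine ⟨Sum.inr e, ⟨e, rfl⟩, ?_, rfl⟩
        rw [hSE, Cn_Cn]
        exact hSE_not e
    have hSE_ext : ∀ e : β, IsExtension (CWAD P) W' (SE e) := by
      intro e
      rw [CWA_ext_iff, hNegSet e]
    have htrace : ∀ e : β, {φ : PropForm α | PropForm.map Sum.inl φ ∈ SE e} = e.1 := by
      intro e
      ext φ
      simp only [Set.mem_setOf_eq]
      constructor
      · intro h
        apply hclosede e
        intro v hv
        have h1 := h _ (hmodel e v hv)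
        rw [eval_map] at h1
        exact h1
      · intro hφ v hv
        have h1 := hv _ (Set.mem_union_left _ (Set.mem_union_left _ ⟨e, φ, hφ, rfl⟩))
        have h2 := hv _ (Set.mem_union_right _ rfl)
        exact h1 h2
    have hreverse : ∀ T, IsExtension (CWAD P) W' T → ∃ e : β, T = SE e := by
      intro T hT
      rw [CWA_ext_iff] at hT
      obtain ⟨S0, hS0⟩ := exists_extension D W hD hsatW
      have hCnT : Cn T = Cn (W' ∪ NegSet P T) := by conv_lhs => rw [hT, Cn_Cn]
      have hEx : ∃ e : β, (pA e).neg.neg ∉ Cn T := by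
        by_contra hall
        push_neg at hall
        have hN : NegSet P T = ∅ := by
          ext φ
          simp only [Set.mem_empty_iff_false, iff_false]
          rintro ⟨q, ⟨e', rfl⟩, hcond, rfl⟩
          exact hcond (hall e')
        set e0 : β := ⟨S0, hS0⟩ with he0
        have h1 := hall e0
        rw [hCnT, hN, Set.union_empty] at h1
        obtain ⟨v, hv⟩ := hsate e0
        have hm := hmodel e0 v hv
        have hmW' : Models (Sum.elim v fun e' : β => e' ≠ e0) W' :=
          fun ψ hψ => hm ψ (Set.mem_union_left _ hψ)
        have h2 := h1 _ hmW'
        rw [eval_negneg] at h2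
        exact h2 rfl
      obtain ⟨e, hcond⟩ := hEx
      have hmemN : (pA e).neg ∈ NegSet P T := ⟨Sum.inr e, ⟨e, rfl⟩, hcond, rfl⟩
      have hNeq : NegSet P T = {(pA e).neg} := by
        ext φ
        constructor
        · rintro ⟨q, ⟨e', rfl⟩, hcond', rfl⟩
          have he : e' = e := by
            by_contra hne
            apply hcond'
            rw [hCnT]
            intro v hv
            have h1 := hv _ (Set.mem_union_left _ (hWB_mem e e' (fun h => hne h.symm)))
            have h2 := hv _ (Set.mem_union_right _ hmemN)
            exact eval_negneg.2 (h1 h2)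
          rw [he]; rfl
        · intro hφ
          rw [Set.mem_singleton_iff] at hφ
          subst hφ
          exact hmemN
      rw [hNeq] at hT
      exact ⟨e, hT⟩
    apply Set.ext
    intro S
    constructor
    · intro hS
      exact ⟨SE ⟨S, hS⟩, hSE_ext ⟨S, hS⟩, (htrace ⟨S, hS⟩).symm⟩
    · rintro ⟨T, hT, rfl⟩
      obtain ⟨e, rfl⟩ := hreverse T hT
      rw [htrace e]
      exact e.2

end CWAAux

/-- every normal default theory is semi-equivalent to a default theory
of the form `(D^{CWA^P}, W')` over a language extended by new atoms. -/
theorem normal_semi_equivalent_CWA {α : Type} [Denumerable α]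
    (D : Set (Default α)) (W : Set (PropForm α)) (hD : ∀ d ∈ D, d.Normal) :
    ∃ (β : Type) (P : Set (α ⊕ β)) (W' : Set (PropForm (α ⊕ β))),
      ext D W =
        {T₀ | ∃ T ∈ ext
            {d : Default (α ⊕ β) | ∃ q ∈ P,
              d = ⟨PropForm.fls.neg, {(PropForm.atom q).neg}, (PropForm.atom q).neg⟩}
            W',
          T₀ = {φ : PropForm α | PropForm.map Sum.inl φ ∈ T}} :=
  CWAAux.main D W hD
end
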